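/- arXiv:2603.13022 — 8 statements merged into one kernel-verified Lean document; each statement's English description precedes it below -/
import Mathlib

section
/- Let E be an exact category and let L --f--> M --g--> N be a sequence in E with gf = 0. If f is a monomorphism, then the sequence is left Ext_E-acyclic if and only if it is left Hom-acyclic. -/
open CategoryTheory CategoryTheory.Limits CategoryTheory.Pretriangulated

universe v u

/-- A Quillen exact structure on a preadditive category: a class of kernel-cokernel
pairs (conflations) satisfying the axioms of an exact category. -/
structure ExactStructure (C : Type u) [Category.{v} C] [Preadditive C] :
    Type (max u v) where
  IsConflation : ∀ ⦃X Y Z : C⦄, (X ⟶ Y) → (Y ⟶ Z) → Prop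
  comp_zero : ∀ ⦃X Y Z : C⦄ ⦃i : X ⟶ Y⦄ ⦃p : Y ⟶ Z⦄, IsConflation i p → i ≫ p = 0
  isKernel : ∀ ⦃X Y Z : C⦄ ⦃i : X ⟶ Y⦄ ⦃p : Y ⟶ Z⦄ (h : IsConflation i p),
    Nonempty (IsLimit (KernelFork.ofι i (comp_zero h)))
  isCokernel : ∀ ⦃X Y Z : C⦄ ⦃i : X ⟶ Y⦄ ⦃p : Y ⟶ Z⦄ (h : IsConflation i p),
    Nonempty (IsColimit (CokernelCofork.ofπ p (comp_zero h)))
  defl_id : ∀ X : C, ∃ (K : C) (i : K ⟶ X), IsConflation i (𝟙 X)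
  infl_id : ∀ X : C, ∃ (Z : C) (p : X ⟶ Z), IsConflation (𝟙 X) p
  defl_comp : ∀ ⦃X Y Z : C⦄ ⦃p : X ⟶ Y⦄ ⦃q : Y ⟶ Z⦄,
    (∃ (K : C) (i : K ⟶ X), IsConflation i p) → (∃ (K : C) (i : K ⟶ Y), IsConflation i q) →
    ∃ (K : C) (i : K ⟶ X), IsConflation i (p ≫ q)
  infl_comp : ∀ ⦃X Y Z : C⦄ ⦃i : X ⟶ Y⦄ ⦃j : Y ⟶ Z⦄,
    (∃ (W : C) (p : Y ⟶ W), IsConflation i p) → (∃ (W : C) (p : Z ⟶ W), IsConflation j p) →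
    ∃ (W : C) (p : Z ⟶ W), IsConflation (i ≫ j) p
  defl_pullback : ∀ ⦃Y Z A : C⦄ ⦃p : Y ⟶ Z⦄,
    (∃ (K : C) (i : K ⟶ Y), IsConflation i p) → ∀ f : A ⟶ Z,
    ∃ (B : C) (q : B ⟶ A) (g : B ⟶ Y),
      (∃ (K : C) (i : K ⟶ B), IsConflation i q) ∧ g ≫ p = q ≫ f
  infl_pushout : ∀ ⦃X Y A : C⦄ ⦃i : X ⟶ Y⦄,
    (∃ (W : C) (p : Y ⟶ W), IsConflation i p) → ∀ f : X ⟶ A,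
    ∃ (B : C) (j : A ⟶ B) (g : Y ⟶ B),
      (∃ (W : C) (p : B ⟶ W), IsConflation j p) ∧ i ≫ g = f ≫ j

namespace ExactStructure

variable {C : Type u} [Category.{v} C] [Preadditive C] (E : ExactStructure C)

/-- `p` is a deflation (admissible epimorphism). -/
def Deflation {Y Z : C} (p : Y ⟶ Z) : Prop :=
  ∃ (K : C) (i : K ⟶ Y), E.IsConflation i p

/-- `i` is an inflation (admissible monomorphism). -/
def Inflation {X Y : C} (i : X ⟶ Y) : Prop :=
  ∃ (Z : C) (p : Y ⟶ Z), E.IsConflation i p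

/-- The sequence `L ⟶ M ⟶ N` is left `Ext`-acyclic at `M`. -/
def LeftExtAcyclic {L M N : C} (f : L ⟶ M) (g : M ⟶ N) : Prop :=
  ∀ ⦃A : C⦄ (a : A ⟶ M), a ≫ g = 0 →
    ∃ (B : C) (p : B ⟶ A) (h : B ⟶ L), E.Deflation p ∧ p ≫ a = h ≫ f

/-- The sequence `L ⟶ M ⟶ N` is left Hom-acyclic at `M`, i.e. `f` is a weak kernel of `g`. -/
def LeftHomAcyclic {L M N : C} (f : L ⟶ M) (g : M ⟶ N) : Prop :=
  ∀ ⦃A : C⦄ (a : A ⟶ M), a ≫ g = 0 → ∃ h : A ⟶ L, a = h ≫ f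

/-- A cochain complex is left `Ext`-acyclic in degree `n`. -/
def LeftExtAcyclicAt (X : CochainComplex C ℤ) (n : ℤ) : Prop :=
  ∀ ⦃A : C⦄ (a : A ⟶ X.X n), a ≫ X.d n (n + 1) = 0 →
    ∃ (B : C) (p : B ⟶ A) (h : B ⟶ X.X (n - 1)),
      E.Deflation p ∧ p ≫ a = h ≫ X.d (n - 1) n

/-- A cochain complex is `E`-acyclic in degree `n`: the differentials around degree `n`
factor through a conflation. -/
def AcyclicAt (X : CochainComplex C ℤ) (n : ℤ) : Prop :=
  ∃ (K Q : C) (pK : X.X (n - 1) ⟶ K) (iK : K ⟶ X.X n)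
    (pQ : X.X n ⟶ Q) (iQ : Q ⟶ X.X (n + 1)),
    E.Deflation pK ∧ E.Inflation iQ ∧ E.IsConflation iK pQ ∧
    X.d (n - 1) n = pK ≫ iK ∧ X.d n (n + 1) = pQ ≫ iQ

end ExactStructure

variable {C : Type u} [Category.{v} C] [Preadditive C]

namespace ExactStructure

variable {E : ExactStructure C}

theorem deflation_id (X : C) : E.Deflation (𝟙 X) :=
  E.defl_id X

theorem Deflation.epi {A B : C} {p : B ⟶ A} (hp : E.Deflation p) : Epi p :=
  let ⟨_, _, hc⟩ := hp
  epi_of_isColimit_cofork (E.isCokernel hc).some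

/-- `p` is the cokernel of its kernel `i`, and `h` kills `i` because `f` is mono, so `h`
descends along `p`. -/
theorem Deflation.exists_eq_comp_of_comp_eq {A B L M : C} {p : B ⟶ A} (hp : E.Deflation p)
    {f : L ⟶ M} [Mono f] {a : A ⟶ M} {h : B ⟶ L} (w : p ≫ a = h ≫ f) :
    ∃ h' : A ⟶ L, a = h' ≫ f := by
  obtain ⟨K, i, hc⟩ := hp
  have hih : i ≫ h = 0 := by
    rw [← cancel_mono f, Category.assoc, ← w, ← Category.assoc, E.comp_zero hc, zero_comp,
      zero_comp]
  obtain ⟨h', hh'⟩ := CokernelCofork.IsColimit.desc' (E.isCokernel hc).some h hih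
  have hp_epi : Epi p := Deflation.epi ⟨K, i, hc⟩
  exact ⟨h', by rw [← cancel_epi p, w, ← hh', Cofork.π_ofπ, Category.assoc]⟩

theorem LeftExtAcyclic.leftHomAcyclic {L M N : C} {f : L ⟶ M} {g : M ⟶ N} [Mono f]
    (hExt : E.LeftExtAcyclic f g) : LeftHomAcyclic f g := fun _ a ha =>
  let ⟨_, _, _, hp, w⟩ := hExt a ha
  hp.exists_eq_comp_of_comp_eq w

theorem LeftHomAcyclic.leftExtAcyclic {L M N : C} {f : L ⟶ M} {g : M ⟶ N}
    (hHom : LeftHomAcyclic f g) : E.LeftExtAcyclic f g := fun A a ha =>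
  let ⟨h, w⟩ := hHom a ha
  ⟨A, 𝟙 A, h, deflation_id A, by rw [Category.id_comp, w]⟩

end ExactStructure

theorem stmt_0_general (E : ExactStructure C) {L M N : C} (f : L ⟶ M) (g : M ⟶ N)
    (hf : Mono f) :
    E.LeftExtAcyclic f g ↔ ExactStructure.LeftHomAcyclic f g :=
  ⟨ExactStructure.LeftExtAcyclic.leftHomAcyclic, ExactStructure.LeftHomAcyclic.leftExtAcyclic⟩

/-- If `f` is a monomorphism, the sequence `L ⟶ M ⟶ N` is left Ext-acyclic iff it is
left Hom-acyclic. -/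
theorem stmt_0 (E : ExactStructure C) {L M N : C} (f : L ⟶ M) (g : M ⟶ N)
    (hfg : f ≫ g = 0) (hf : Mono f) :
    E.LeftExtAcyclic f g ↔ ExactStructure.LeftHomAcyclic f g :=
  stmt_0_general E f g hf
end

section
/- Let F be an exact category and E ⊆ F a resolving subcategory. A sequence L --f--> M --g--> N with L, M, N in E and gf = 0 is left Ext_F-acyclic if and only if it is left Ext_E-acyclic. -/
open CategoryTheory CategoryTheory.Limits CategoryTheory.Pretriangulated

universe v u

variable {C : Type u} [Category.{v} C] [Preadditive C]

/-!
An `F`-deflation `p : B ⟶ A` onto an object of `E` becomes an `E`-deflation after precomposing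
with a deflation `B' ⟶ B` from an object of `E` (R1): the composite is an `F`-deflation between
objects of `E`, so its kernel lies in `E` by (R2). Conversely, since deflations compose, a test
object `A` of `F` may be replaced by an object of `E` covering it.
-/

namespace ExactStructure

variable {F : ExactStructure C}

theorem Deflation.comp {X Y Z : C} {p : X ⟶ Y} {q : Y ⟶ Z} (hp : F.Deflation p)
    (hq : F.Deflation q) : F.Deflation (p ≫ q) :=
  F.defl_comp hp hq

theorem exists_comp_isConflation_of_resolving (P : C → Prop)
    (hgen : ∀ M : C, ∃ (L : C) (p : L ⟶ M), P L ∧ F.Deflation p)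
    (hdefl : ∀ ⦃X Y Z : C⦄ (i : X ⟶ Y) (p : Y ⟶ Z),
      F.IsConflation i p → P Y → P Z → P X)
    {B A : C} {p : B ⟶ A} (hp : F.Deflation p) (hA : P A) :
    ∃ (B' : C) (q : B' ⟶ B), P B' ∧
      ∃ (K : C) (i : K ⟶ B'), F.IsConflation i (q ≫ p) ∧ P K := by
  obtain ⟨B', q, hB', hq⟩ := hgen B
  obtain ⟨K, i, hi⟩ := hq.comp hp
  exact ⟨B', q, hB', K, i, hi, hdefl i _ hi hB' hA⟩

theorem leftExtAcyclic_of_covering (P : C → Prop)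
    (hgen : ∀ M : C, ∃ (L : C) (p : L ⟶ M), P L ∧ F.Deflation p)
    {L M N : C} {f : L ⟶ M} {g : M ⟶ N}
    (hP : ∀ ⦃A : C⦄, P A → ∀ a : A ⟶ M, a ≫ g = 0 →
      ∃ (B : C) (p : B ⟶ A) (h : B ⟶ L), F.Deflation p ∧ p ≫ a = h ≫ f) :
    F.LeftExtAcyclic f g := by
  intro A a hag
  obtain ⟨A', q, hA', hq⟩ := hgen A
  obtain ⟨B, p, h, hp, hcomm⟩ := hP hA' (q ≫ a) (by rw [Category.assoc, hag, Limits.comp_zero])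
  exact ⟨B, p ≫ q, h, hp.comp hq, by rw [Category.assoc, hcomm]⟩

end ExactStructure

theorem stmt_2_general (F : ExactStructure C) (P : C → Prop)
    -- (R1): every object of `F` admits a deflation from an object of `E`
    (hgen : ∀ M : C, ∃ (L : C) (p : L ⟶ M), P L ∧ F.Deflation p)
    -- (R2): `E` is deflation-closed in `F`
    (hdefl : ∀ ⦃X Y Z : C⦄ (i : X ⟶ Y) (p : Y ⟶ Z),
      F.IsConflation i p → P Y → P Z → P X)
    {L M N : C} (f : L ⟶ M) (g : M ⟶ N) :
    F.LeftExtAcyclic f g ↔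
      (∀ ⦃A : C⦄, P A → ∀ a : A ⟶ M, a ≫ g = 0 →
        ∃ (B : C) (p : B ⟶ A) (h : B ⟶ L), P B ∧
          (∃ (K : C) (i : K ⟶ B), F.IsConflation i p ∧ P K) ∧ p ≫ a = h ≫ f) := by
  constructor
  · intro hF A hA a hag
    obtain ⟨B, p, h, hp, hcomm⟩ := hF a hag
    obtain ⟨B', q, hB', hqp⟩ :=
      ExactStructure.exists_comp_isConflation_of_resolving P hgen hdefl hp hA
    exact ⟨B', q ≫ p, q ≫ h, hB', hqp, by rw [Category.assoc, hcomm, Category.assoc]⟩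
  · intro hE
    refine ExactStructure.leftExtAcyclic_of_covering P hgen fun A hA a hag => ?_
    obtain ⟨B, p, h, -, ⟨K, i, hi, -⟩, hcomm⟩ := hE hA a hag
    exact ⟨B, p, h, ⟨K, i, hi⟩, hcomm⟩

/-- For a resolving subcategory `E ⊆ F` (given by the predicate `P`), a sequence with
objects in `E` is left Ext_F-acyclic iff it is left Ext_E-acyclic. -/
theorem stmt_2 (F : ExactStructure C) (P : C → Prop)
    -- `P` is extension-closed (fully exact subcategory)
    (hext : ∀ ⦃X Y Z : C⦄ (i : X ⟶ Y) (p : Y ⟶ Z),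
      F.IsConflation i p → P X → P Z → P Y)
    -- (R1): every object of `F` admits a deflation from an object of `E`
    (hgen : ∀ M : C, ∃ (L : C) (p : L ⟶ M), P L ∧ F.Deflation p)
    -- (R2): `E` is deflation-closed in `F`
    (hdefl : ∀ ⦃X Y Z : C⦄ (i : X ⟶ Y) (p : Y ⟶ Z),
      F.IsConflation i p → P Y → P Z → P X)
    {L M N : C} (f : L ⟶ M) (g : M ⟶ N) (hL : P L) (hM : P M) (hN : P N)
    (hfg : f ≫ g = 0) :
    F.LeftExtAcyclic f g ↔
      (∀ ⦃A : C⦄, P A → ∀ a : A ⟶ M, a ≫ g = 0 →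
        ∃ (B : C) (p : B ⟶ A) (h : B ⟶ L), P B ∧
          (∃ (K : C) (i : K ⟶ B), F.IsConflation i p ∧ P K) ∧ p ≫ a = h ≫ f) :=
  stmt_2_general F P hgen hdefl f g
end

section
/- Let E be an exact category and f : X → Y a morphism of cochain complexes over E. If X is left Ext_E-acyclic in degree n+1 and Y is left Ext_E-acyclic in degree n, then the mapping cone of f is left Ext_E-acyclic in degree n. -/
open CategoryTheory CategoryTheory.Limits CategoryTheory.Pretriangulated

universe v u

/-!
Write `a : A ⟶ cone(f)ⁿ` as `(x, y)` with `x : A ⟶ Xⁿ⁺¹`, `y : A ⟶ Yⁿ`. The cocycle condition says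
`d x = 0` and `f x + d y = 0`. After a deflation `p₁`, acyclicity of `X` gives `p₁ x = d h₁`;
then `b = p₁ y + f h₁` is a cocycle of `Y`, so after a further deflation `p₂` it is `d h₂`, and
`p₂ p₁ a = d (-p₂ h₁, h₂)` in the cone.
-/

namespace ExactStructure

lemma LeftExtAcyclicAt.exists_deflation_comp_eq {C : Type u} [Category.{v} C] [Preadditive C]
    {E : ExactStructure C} {X : CochainComplex C ℤ} {j : ℤ}
    (hX : E.LeftExtAcyclicAt X j) (i k : ℤ) (hij : i + 1 = j) (hjk : j + 1 = k) {A : C}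
    (a : A ⟶ X.X j) (ha : a ≫ X.d j k = 0) :
    ∃ (B : C) (p : B ⟶ A) (h : B ⟶ X.X i), E.Deflation p ∧ p ≫ a = h ≫ X.d i j := by
  obtain rfl : i = j - 1 := by omega
  subst hjk
  exact hX a ha

end ExactStructure

namespace CochainComplex.mappingCone

variable {C : Type u} [Category.{v} C] [Preadditive C] {X Y : CochainComplex C ℤ} (f : X ⟶ Y)
  [HomologicalComplex.HasHomotopyCofiber f] {A : C}

lemma comp_inl_add_comp_inr_eq_iff (i j : ℤ) (hij : i + 1 = j) (u u' : A ⟶ X.X j)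
    (v v' : A ⟶ Y.X i) :
    u ≫ (inl f).v j i (by omega) + v ≫ (inr f).f i =
        u' ≫ (inl f).v j i (by omega) + v' ≫ (inr f).f i ↔ u = u' ∧ v = v' := by
  rw [ext_to_iff f i j hij]
  simp

lemma comp_inl_add_comp_inr_eq_zero_iff (i j : ℤ) (hij : i + 1 = j) (u : A ⟶ X.X j)
    (v : A ⟶ Y.X i) :
    u ≫ (inl f).v j i (by omega) + v ≫ (inr f).f i = 0 ↔ u = 0 ∧ v = 0 := by
  simpa using comp_inl_add_comp_inr_eq_iff f i j hij u 0 v 0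

/-- The differential of the cone is the matrix `((-d_X, 0), (f, d_Y))`. -/
lemma comp_inl_add_comp_inr_comp_d (i j k : ℤ) (hij : i + 1 = j) (hjk : j + 1 = k)
    (u : A ⟶ X.X j) (v : A ⟶ Y.X i) :
    (u ≫ (inl f).v j i (by omega) + v ≫ (inr f).f i) ≫ (mappingCone f).d i j =
      (-(u ≫ X.d j k)) ≫ (inl f).v k j (by omega) +
        (u ≫ f.f j + v ≫ Y.d i j) ≫ (inr f).f j := by
  simp only [Preadditive.add_comp, Category.assoc, inl_v_d f j i k (by omega) (by omega),
    inr_f_d, Preadditive.comp_sub, Preadditive.neg_comp]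
  abel

end CochainComplex.mappingCone

variable {C : Type u} [Category.{v} C] [Preadditive C] [HasBinaryBiproducts C]

open CochainComplex.mappingCone in
/-- If `X` is left Ext-acyclic in degree `n+1` and `Y` is left Ext-acyclic in degree `n`,
then `cone(f)` is left Ext-acyclic in degree `n`. -/
theorem stmt_3 (E : ExactStructure C) {X Y : CochainComplex C ℤ} (f : X ⟶ Y) (n : ℤ)
    (hX : E.LeftExtAcyclicAt X (n + 1)) (hY : E.LeftExtAcyclicAt Y n) :
    E.LeftExtAcyclicAt (CochainComplex.mappingCone f) n := by
  intro A a ha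
  obtain ⟨x, y, rfl⟩ := decomp_to f a (n + 1) rfl
  rw [comp_inl_add_comp_inr_comp_d f n (n + 1) (n + 1 + 1) rfl rfl,
    comp_inl_add_comp_inr_eq_zero_iff f (n + 1) (n + 1 + 1) rfl, neg_eq_zero] at ha
  obtain ⟨hx, hxy⟩ := ha
  obtain ⟨B₁, p₁, h₁, hp₁, hx₁⟩ := hX.exists_deflation_comp_eq n _ rfl rfl x hx
  have hb : (p₁ ≫ y + h₁ ≫ f.f n) ≫ Y.d n (n + 1) = 0 := by
    rw [Preadditive.add_comp, Category.assoc, Category.assoc, f.comm, ← Category.assoc h₁,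
      ← hx₁, Category.assoc, ← Preadditive.comp_add, add_comm (y ≫ _), hxy, comp_zero]
  obtain ⟨B₂, p₂, h₂, hp₂, hb₂⟩ := hY _ hb
  refine ⟨B₂, p₂ ≫ p₁, (-(p₂ ≫ h₁)) ≫ (inl f).v n (n - 1) (by omega) + h₂ ≫ (inr f).f (n - 1),
    E.defl_comp hp₂ hp₁, ?_⟩
  rw [comp_inl_add_comp_inr_comp_d f (n - 1) n (n + 1) (by omega) rfl, Preadditive.comp_add,
    ← Category.assoc, ← Category.assoc, comp_inl_add_comp_inr_eq_iff f _ _ (by omega)]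
  constructor
  · simp [hx₁]
  · rw [← hb₂]
    simp
end

section
/- Let E be an exact category and f : X → Y a morphism of cochain complexes over E. If X and cone(f) are both left Ext_E-acyclic in degree n, then Y is left Ext_E-acyclic in degree n. -/
/-!
A cycle `a` of `Y` in degree `n` gives the cycle `inr a` of `cone(f)`. After a deflation it is
the boundary of some `(x, y) ∈ X^n ⊕ Y^(n-1)`, which says exactly that `x` is a cycle of `X` and
`a = f x + d y`. After a second deflation `x = d h`, so `a = d (f h + y)`.
-/

open CategoryTheory CategoryTheory.Limits CategoryTheory.Pretriangulated

universe v u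

theorem ExactStructure.Deflation.comp_s5 {C : Type u} [Category.{v} C] [Preadditive C]
    {E : ExactStructure C} {X Y Z : C} {p : X ⟶ Y} {q : Y ⟶ Z}
    (hp : E.Deflation p) (hq : E.Deflation q) : E.Deflation (p ≫ q) :=
  E.defl_comp hp hq

namespace CochainComplex.mappingCone

variable {C : Type u} [Category.{v} C] [Preadditive C] {X Y : CochainComplex C ℤ} (f : X ⟶ Y)
  [HomologicalComplex.HasHomotopyCofiber f] {B : C} {i j : ℤ} (hij : i + 1 = j)
  {h : B ⟶ (mappingCone f).X i} {y : B ⟶ Y.X j}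

theorem fst_v_comp_d_eq_zero_of_comp_d_eq_inr (k : ℤ) (hjk : j + 1 = k)
    (hh : h ≫ (mappingCone f).d i j = y ≫ (inr f).f j) :
    (h ≫ (fst f).1.v i j hij) ≫ X.d j k = 0 := by
  have := congrArg (· ≫ (fst f).1.v j k hjk) hh
  simp only [Category.assoc, d_fst_v f i j k hij hjk, inr_f_fst_v, comp_zero,
    Preadditive.comp_neg, neg_eq_zero] at this
  rwa [Category.assoc]

theorem eq_add_of_comp_d_eq_inr (hh : h ≫ (mappingCone f).d i j = y ≫ (inr f).f j) :
    y = (h ≫ (fst f).1.v i j hij) ≫ f.f j + (h ≫ (snd f).v i i (add_zero i)) ≫ Y.d i j := by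
  have := congrArg (· ≫ (snd f).v j j (add_zero j)) hh
  simp only [Category.assoc, d_snd_v f i j hij, inr_f_snd_v, Category.comp_id,
    Preadditive.comp_add] at this
  simp only [this, Category.assoc]

end CochainComplex.mappingCone

variable {C : Type u} [Category.{v} C] [Preadditive C] [HasBinaryBiproducts C]

/-- If `X` and `cone(f)` are left Ext-acyclic in degree `n`, then so is `Y`. -/
theorem stmt_5 (E : ExactStructure C) {X Y : CochainComplex C ℤ} (f : X ⟶ Y) (n : ℤ)
    (hX : E.LeftExtAcyclicAt X n)
    (hc : E.LeftExtAcyclicAt (CochainComplex.mappingCone f) n) :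
    E.LeftExtAcyclicAt Y n := by
  intro A a ha
  have hmn : n - 1 + 1 = n := by omega
  obtain ⟨B₁, p₁, h₁, hp₁, hh₁⟩ := hc (a ≫ (CochainComplex.mappingCone.inr f).f n) (by
    rw [Category.assoc, CochainComplex.mappingCone.inr_f_d, ← Category.assoc, ha, zero_comp])
  have hh := ((Category.assoc _ _ _).trans hh₁).symm
  set x := h₁ ≫ (CochainComplex.mappingCone.fst f).1.v (n - 1) n hmn
  set y := h₁ ≫ (CochainComplex.mappingCone.snd f).v (n - 1) (n - 1) (add_zero _)
  have hpa : p₁ ≫ a = x ≫ f.f n + y ≫ Y.d (n - 1) n :=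
    CochainComplex.mappingCone.eq_add_of_comp_d_eq_inr f hmn hh
  obtain ⟨B₂, p₂, h₂, hp₂, hh₂⟩ :=
    hX x (CochainComplex.mappingCone.fst_v_comp_d_eq_zero_of_comp_d_eq_inr f hmn (n + 1) rfl hh)
  refine ⟨B₂, p₂ ≫ p₁, h₂ ≫ f.f (n - 1) + p₂ ≫ y, hp₂.comp_s5 hp₁, ?_⟩
  rw [Category.assoc, hpa, Preadditive.comp_add, ← Category.assoc, hh₂]
  simp only [Category.assoc, Preadditive.add_comp, f.comm]
end

section
/- Let E be an exact category and f : X → Y a morphism of cochain complexes over E. If Y is left Ext_E-acyclic in degree n and cone(f) is left Ext_E-acyclic in degree n-1, then X is left Ext_E-acyclic in degree n. -/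
/-!
Let `a : A ⟶ X.X n` be a cycle. Since `a ≫ f.f n` is a cycle of `Y`, after a deflation `p₁` it
becomes a boundary `h₁ ≫ d`. Then `p₁ ≫ a` and `h₁` assemble into a cycle of `cone(f)` in degree
`n - 1`, which after a second deflation `p₂` is a boundary `h₂ ≫ d`. Projecting this equation to
the `X`-summand with `fst` gives `p₂ ≫ p₁ ≫ a = -(h₂ ≫ fst) ≫ d`, and deflations compose.
-/

open CategoryTheory CategoryTheory.Limits CategoryTheory.Pretriangulated

universe v u

namespace CochainComplex.mappingCone

variable {C : Type*} [Category C] [Preadditive C] {F G : CochainComplex C ℤ} (φ : F ⟶ G)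
  [HomologicalComplex.HasHomotopyCofiber φ] {A : C} {i j : ℤ} (a : A ⟶ F.X i) (b : A ⟶ G.X j)

lemma inl_v_sub_inr_f_comp_d (hji : j + 1 = i) (k : ℤ) (hik : i + 1 = k) (ha : a ≫ F.d i k = 0)
    (hab : a ≫ φ.f i = b ≫ G.d j i) :
    (a ≫ (inl φ).v i j (by omega) - b ≫ (inr φ).f j) ≫ (mappingCone φ).d j i = 0 := by
  simp only [Preadditive.sub_comp, Category.assoc, inl_v_d φ i j k (by omega) (by omega),
    inr_f_d, Preadditive.comp_sub, reassoc_of% ha, zero_comp, sub_zero, reassoc_of% hab,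
    sub_self]

lemma inl_v_sub_inr_f_comp_fst_v (hji : j + 1 = i) :
    (a ≫ (inl φ).v i j (by omega) - b ≫ (inr φ).f j) ≫ (fst φ).1.v j i hji = a := by
  simp

end CochainComplex.mappingCone

variable {C : Type u} [Category.{v} C] [Preadditive C] [HasBinaryBiproducts C]

open CochainComplex.mappingCone in
/-- If `Y` is left Ext-acyclic in degree `n` and `cone(f)` is left Ext-acyclic in degree
`n-1`, then `X` is left Ext-acyclic in degree `n`. -/
theorem stmt_6 (E : ExactStructure C) {X Y : CochainComplex C ℤ} (f : X ⟶ Y) (n : ℤ)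
    (hY : E.LeftExtAcyclicAt Y n)
    (hc : E.LeftExtAcyclicAt (CochainComplex.mappingCone f) (n - 1)) :
    E.LeftExtAcyclicAt X n := by
  intro A a ha
  obtain ⟨B₁, p₁, h₁, hp₁, eq₁⟩ := hY (a ≫ f.f n) (by simp [reassoc_of% ha])
  have hn : n - 1 + 1 = n := sub_add_cancel n 1
  set b := p₁ ≫ a ≫ (inl f).v n (n - 1) (by omega) - h₁ ≫ (inr f).f (n - 1)
  have hb : b ≫ (CochainComplex.mappingCone f).d (n - 1) (n - 1 + 1) = 0 := by
    rw [hn]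
    simpa only [Category.assoc] using inl_v_sub_inr_f_comp_d f (p₁ ≫ a) h₁ hn (n + 1) rfl
      (by simp [ha]) (by simpa only [Category.assoc] using eq₁)
  obtain ⟨B₂, p₂, h₂, hp₂, eq₂⟩ := hc b hb
  refine ⟨B₂, p₂ ≫ p₁, -(h₂ ≫ (fst f).1.v (n - 1 - 1) (n - 1) (by omega)),
    E.defl_comp hp₂ hp₁, ?_⟩
  calc (p₂ ≫ p₁) ≫ a = p₂ ≫ b ≫ (fst f).1.v (n - 1) n hn := by
        simpa only [Category.assoc] using
          (congrArg (p₂ ≫ ·) (inl_v_sub_inr_f_comp_fst_v f (p₁ ≫ a) h₁ hn)).symm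
    _ = _ := by
        rw [← Category.assoc, eq₂, Category.assoc, d_fst_v f _ _ _ (by omega) hn]
        simp only [Preadditive.comp_neg, Preadditive.neg_comp, Category.assoc]
end

section
/- Let E be an exact category. For any boundedness condition * ∈ {unbounded, bounded, left-bounded, right-bounded}, the full subcategory of the homotopy category K^*(E) consisting of complexes that are left Ext_E-acyclic in degree n is closed under direct summands, isomorphisms, and extensions (i.e., it is a thick-in-the-extension-closed sense subcategory: closed under cones of maps between shifts appropriately, extensions meaning the middle term of a triangle with outer terms in the class lies in the class). -/
open CategoryTheory CategoryTheory.Limits CategoryTheory.Pretriangulated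

universe v u

/-!
Homotopic chain maps agree on an `n`-cycle `a` up to the boundary `a ≫ H.hom n (n - 1) ≫ d`,
so a homotopy retract of a complex in which every `n`-cycle is a boundary after precomposition
with a deflation inherits this property; isomorphisms in the homotopy category are a special case.

For extensions, it suffices to treat the triangle `X ⟶ Y ⟶ cone φ`. If `b` is an `n`-cycle of `Y`,
then `b ≫ inr` is, after a deflation `p`, the boundary of some `(x, y) : B ⟶ X^n ⊕ Y^(n-1)`.
Reading off the components, `x` is a cycle of `X` and `p ≫ b = x ≫ φ + y ≫ d`; after a second
deflation `x` is a boundary too, hence so is `b`, and deflations compose.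
-/

section

variable {C : Type u} [Category.{v} C] [Preadditive C]

lemma Homotopy.comp_f_eq_of_comp_d_eq_zero {X Y : CochainComplex C ℤ} {f g : X ⟶ Y}
    (H : Homotopy f g) {n : ℤ} {A : C} {a : A ⟶ X.X n} (ha : a ≫ X.d n (n + 1) = 0) :
    a ≫ f.f n = a ≫ g.f n + (a ≫ H.hom n (n - 1)) ≫ Y.d (n - 1) n := by
  have hcomm := H.comm n
  rw [dNext_eq H.hom (show (ComplexShape.up ℤ).Rel n (n + 1) by simp),
    prevD_eq H.hom (show (ComplexShape.up ℤ).Rel (n - 1) n by simp)] at hcomm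
  rw [hcomm]
  simp only [Preadditive.comp_add, Category.assoc, reassoc_of% ha, zero_comp, zero_add]
  abel

namespace CochainComplex.mappingCone

variable [HasBinaryBiproducts C] {X Y : CochainComplex C ℤ} (φ : X ⟶ Y) {n : ℤ} {B : C}
  {h : B ⟶ (mappingCone φ).X (n - 1)} {c : B ⟶ Y.X n}

lemma fst_comp_d_eq_zero_of_inr_eq_d
    (hc : c ≫ (inr φ).f n = h ≫ (mappingCone φ).d (n - 1) n) :
    (h ≫ (fst φ).1.v (n - 1) n (by omega)) ≫ X.d n (n + 1) = 0 := by
  have := hc =≫ (fst φ).1.v n (n + 1) rfl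
  simpa [d_fst_v φ (n - 1) n (n + 1) (by omega) rfl] using this.symm

lemma eq_fst_comp_add_snd_comp_d_of_inr_eq_d
    (hc : c ≫ (inr φ).f n = h ≫ (mappingCone φ).d (n - 1) n) :
    c = (h ≫ (fst φ).1.v (n - 1) n (by omega)) ≫ φ.f n +
      (h ≫ (snd φ).v (n - 1) (n - 1) (add_zero _)) ≫ Y.d (n - 1) n := by
  have := hc =≫ (snd φ).v n n (add_zero _)
  simpa [d_snd_v φ (n - 1) n (by omega)] using this

end CochainComplex.mappingCone

namespace ExactStructure

open CochainComplex CochainComplex.mappingCone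

variable (E : ExactStructure C) {n : ℤ}

lemma leftExtAcyclicAt_of_homotopy_retract {X Y : CochainComplex C ℤ} (e : X ⟶ Y) (r : Y ⟶ X)
    (H : Homotopy (e ≫ r) (𝟙 X)) (hY : E.LeftExtAcyclicAt Y n) : E.LeftExtAcyclicAt X n := by
  intro A a ha
  obtain ⟨B, p, h, hp, hboundary⟩ := hY (a ≫ e.f n) (by simp [reassoc_of% ha])
  refine ⟨B, p, h ≫ r.f (n - 1) - p ≫ a ≫ H.hom n (n - 1), hp, ?_⟩
  have hretract := H.comp_f_eq_of_comp_d_eq_zero ha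
  simp only [HomologicalComplex.comp_f, HomologicalComplex.id_f, Category.comp_id] at hretract
  calc p ≫ a = p ≫ a ≫ e.f n ≫ r.f n - p ≫ (a ≫ H.hom n (n - 1)) ≫ X.d (n - 1) n := by
        rw [hretract]; simp
    _ = _ := by
        rw [reassoc_of% hboundary]
        simp [Preadditive.sub_comp]

lemma leftExtAcyclicAt_of_retract {X Y : HomotopyCategory C (ComplexShape.up ℤ)}
    (e : X ⟶ Y) (r : Y ⟶ X) (h : e ≫ r = 𝟙 X) (hY : E.LeftExtAcyclicAt Y.as n) :
    E.LeftExtAcyclicAt X.as n :=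
  E.leftExtAcyclicAt_of_homotopy_retract e.out r.out
    (HomotopyCategory.homotopyOfEq _ _ (by
      rw [Functor.map_comp, HomotopyCategory.quotient_map_out, HomotopyCategory.quotient_map_out]
      exact h)) hY

lemma leftExtAcyclicAt_of_iso {X Y : HomotopyCategory C (ComplexShape.up ℤ)} (e : X ≅ Y)
    (hY : E.LeftExtAcyclicAt Y.as n) : E.LeftExtAcyclicAt X.as n :=
  E.leftExtAcyclicAt_of_retract e.hom e.inv e.hom_inv_id hY

lemma leftExtAcyclicAt_of_mappingCone [HasBinaryBiproducts C] {X Y : CochainComplex C ℤ}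
    (φ : X ⟶ Y)
    (hX : E.LeftExtAcyclicAt X n) (hφ : E.LeftExtAcyclicAt (mappingCone φ) n) :
    E.LeftExtAcyclicAt Y n := by
  intro A b hb
  obtain ⟨B₁, p, h, hp, hcone⟩ := hφ (b ≫ (inr φ).f n) (by simp [reassoc_of% hb])
  rw [← Category.assoc] at hcone
  obtain ⟨B₂, q, k, hq, hX'⟩ := hX _ (fst_comp_d_eq_zero_of_inr_eq_d φ hcone)
  refine ⟨B₂, q ≫ p, k ≫ φ.f (n - 1) + q ≫ h ≫ (snd φ).v (n - 1) (n - 1) (add_zero _),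
    E.defl_comp hq hp, ?_⟩
  rw [Category.assoc, eq_fst_comp_add_snd_comp_d_of_inr_eq_d φ hcone, Preadditive.comp_add,
    ← Category.assoc q, hX']
  simp

lemma leftExtAcyclicAt_obj₂_of_distinguished [HasZeroObject C] [HasBinaryBiproducts C]
    (T : Triangle (HomotopyCategory C (ComplexShape.up ℤ)))
    (hT : T ∈ distTriang (HomotopyCategory C (ComplexShape.up ℤ)))
    (h₁ : E.LeftExtAcyclicAt T.obj₁.as n) (h₃ : E.LeftExtAcyclicAt T.obj₃.as n) :
    E.LeftExtAcyclicAt T.obj₂.as n := by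
  obtain ⟨X, Y, φ, ⟨e⟩⟩ := hT
  have hX : E.LeftExtAcyclicAt X n := E.leftExtAcyclicAt_of_iso (Triangle.π₁.mapIso e).symm h₁
  have hφ : E.LeftExtAcyclicAt (mappingCone φ) n :=
    E.leftExtAcyclicAt_of_iso (Triangle.π₃.mapIso e).symm h₃
  exact E.leftExtAcyclicAt_of_iso (Triangle.π₂.mapIso e)
    (E.leftExtAcyclicAt_of_mappingCone φ hX hφ)

end ExactStructure

end

variable {C : Type u} [Category.{v} C] [Preadditive C] [HasZeroObject C] [HasBinaryBiproducts C]

/-- In the homotopy category, the class of complexes which are left Ext-acyclic in degree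
`n` is closed under direct summands (retracts), isomorphisms and extensions. -/
theorem stmt_7 (E : ExactStructure C) (n : ℤ) :
    (∀ (X Y : HomotopyCategory C (ComplexShape.up ℤ)) (e : X ⟶ Y) (r : Y ⟶ X),
        e ≫ r = 𝟙 X → E.LeftExtAcyclicAt Y.as n → E.LeftExtAcyclicAt X.as n) ∧
    (∀ X Y : HomotopyCategory C (ComplexShape.up ℤ), Nonempty (X ≅ Y) →
        E.LeftExtAcyclicAt Y.as n → E.LeftExtAcyclicAt X.as n) ∧
    (∀ T : Triangle (HomotopyCategory C (ComplexShape.up ℤ)),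
        (T ∈ distTriang (HomotopyCategory C (ComplexShape.up ℤ))) →
        E.LeftExtAcyclicAt T.obj₁.as n → E.LeftExtAcyclicAt T.obj₃.as n →
        E.LeftExtAcyclicAt T.obj₂.as n) :=
  ⟨fun _ _ e r h => E.leftExtAcyclicAt_of_retract e r h,
    fun _ _ ⟨e⟩ => E.leftExtAcyclicAt_of_iso e,
    fun T hT => E.leftExtAcyclicAt_obj₂_of_distinguished T hT⟩
end

section
/- Let E be a small exact category. A sequence L --f--> M --g--> N in E with gf = 0 is left Ext_E-acyclic if and only if the induced sequence of representable functors Y(L) → Y(M) → Y(N) is exact (acyclic at the middle) in the quotient abelian category Mod(E)/Eff(E) of the category of additive functors E^op → Ab by the Serre subcategory of locally effaceable functors. -/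
/-!
Evaluated at `A`, the homology `H` of `Y(L) ⟶ Y(M) ⟶ Y(N)` is the homology of the complex of
abelian groups `Hom(A, L) ⟶ Hom(A, M) ⟶ Hom(A, N)`. So every `x ∈ H(A)` is the class of some
`a : A ⟶ M` with `a ≫ g = 0`, and its restriction along `p : B ⟶ A` vanishes exactly when
`p ≫ a` factors through `f`. Letting `p` range over deflations, local effaceability of `H`
becomes left `Ext`-acyclicity word for word.
-/

open CategoryTheory CategoryTheory.Limits CategoryTheory.Pretriangulated

universe v u

variable {C : Type u} [SmallCategory C] [Preadditive C]

/-- A functor `F : Cᵒᵖ ⥤ Ab` is locally effaceable if every element of `F(A)` is killed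
by restriction along some deflation `B ⟶ A`. -/
def LocEff (E : ExactStructure C) (F : Cᵒᵖ ⥤ AddCommGrpCat.{u}) : Prop :=
  ∀ (A : C) (x : F.obj (Opposite.op A)), ∃ (B : C) (p : B ⟶ A),
    E.Deflation p ∧ F.map p.op x = 0

namespace CategoryTheory.ShortComplex

section Ab

variable {S : ShortComplex AddCommGrpCat.{u}}

noncomputable def abMk (a : S.X₂) (ha : S.g a = 0) : S.homology :=
  S.homologyπ (S.abCyclesIso.inv ⟨a, ha⟩)

lemma abMk_eq_abHomologyIso_inv (a : S.X₂) (ha : S.g a = 0) :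
    abMk a ha = S.abHomologyIso.inv (QuotientAddGroup.mk ⟨a, ha⟩) :=
  (ConcreteCategory.congr_hom S.abLeftHomologyData.π_comp_homologyIso_inv ⟨a, ha⟩).symm

lemma exists_abMk_eq (x : S.homology) : ∃ (a : S.X₂) (ha : S.g a = 0), abMk a ha = x := by
  obtain ⟨⟨a, ha⟩, hx⟩ := QuotientAddGroup.mk_surjective (S.abHomologyIso.hom x)
  exact ⟨a, ha, (abMk_eq_abHomologyIso_inv a ha).trans (by rw [hx, Iso.hom_inv_id_apply])⟩

lemma abMk_eq_zero_iff (a : S.X₂) (ha : S.g a = 0) :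
    abMk a ha = 0 ↔ ∃ l : S.X₁, S.f l = a := by
  rw [abMk_eq_abHomologyIso_inv,
    map_eq_zero_iff _ ((AddCommGrpCat.mono_iff_injective _).1 inferInstance),
    QuotientAddGroup.eq_zero_iff]
  simp only [AddMonoidHom.mem_range, Subtype.ext_iff, abToCycles_apply_coe]

variable {S₂ : ShortComplex AddCommGrpCat.{u}}

lemma homologyMap_abMk (φ : S ⟶ S₂) (a : S.X₂) (ha : S.g a = 0) :
    homologyMap φ (abMk a ha) = abMk (φ.τ₂ a)
      (by rw [← ConcreteCategory.comp_apply, φ.comm₂₃, ConcreteCategory.comp_apply, ha,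
        map_zero]) := by
  rw [abMk, abMk, ← ConcreteCategory.comp_apply, homologyπ_naturality,
    ConcreteCategory.comp_apply]
  congr 1
  apply (AddCommGrpCat.mono_iff_injective S₂.iCycles).1 inferInstance
  rw [← ConcreteCategory.comp_apply, cyclesMap_i, ConcreteCategory.comp_apply,
    abCyclesIso_inv_apply_iCycles, abCyclesIso_inv_apply_iCycles]

end Ab

section FunctorCategory

variable {J : Type*} [Category J] (S : ShortComplex (J ⥤ AddCommGrpCat.{u}))

noncomputable def homologyObjMk {j : J} (a : S.X₂.obj j) (ha : S.g.app j a = 0) :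
    S.homology.obj j :=
  (S.mapHomologyIso ((evaluation J AddCommGrpCat).obj j)).hom
    (abMk (S := S.map ((evaluation J AddCommGrpCat).obj j)) a ha)

lemma exists_homologyObjMk_eq {j : J} (x : S.homology.obj j) :
    ∃ (a : S.X₂.obj j) (ha : S.g.app j a = 0), S.homologyObjMk a ha = x := by
  obtain ⟨a, ha, hx⟩ :=
    exists_abMk_eq ((S.mapHomologyIso ((evaluation J AddCommGrpCat).obj j)).inv x)
  exact ⟨a, ha, (congrArg _ hx).trans (Iso.inv_hom_id_apply _ x)⟩

lemma homology_map_homologyObjMk_eq_zero_iff {j j' : J} (p : j ⟶ j') (a : S.X₂.obj j)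
    (ha : S.g.app j a = 0) :
    S.homology.map p (S.homologyObjMk a ha) = 0 ↔
      ∃ l : S.X₁.obj j', S.f.app j' l = S.X₂.map p a := by
  have hmap : S.homology.map p = ((evaluation J AddCommGrpCat).map p).app S.homology := rfl
  rw [hmap, NatTrans.app_homology, ConcreteCategory.comp_apply, ConcreteCategory.comp_apply,
    map_eq_zero_iff _ ((AddCommGrpCat.mono_iff_injective _).1 inferInstance), homologyObjMk,
    Iso.hom_inv_id_apply]
  -- `erw`: `(S.map ((evaluation J _).obj j)).X₂` is `S.X₂.obj j` only up to unfolding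
  erw [homologyMap_abMk, abMk_eq_zero_iff]
  rfl

end FunctorCategory

end CategoryTheory.ShortComplex

/-- A sequence in `E` is left Ext-acyclic iff the sequence of representable functors is
exact at the middle in `Mod(E)/Eff(E)`, i.e. the homology of
`Y(L) ⟶ Y(M) ⟶ Y(N)` at `Y(M)` is locally effaceable. -/
theorem stmt_13 (E : ExactStructure C) {L M N : C} (f : L ⟶ M) (g : M ⟶ N)
    (hfg : f ≫ g = 0) :
    E.LeftExtAcyclic f g ↔
      LocEff E (ShortComplex.mk (preadditiveYoneda.map f) (preadditiveYoneda.map g)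
        (by rw [← Functor.map_comp, hfg, Functor.map_zero])).homology := by
  set S := ShortComplex.mk (preadditiveYoneda.map f) (preadditiveYoneda.map g)
    (by rw [← Functor.map_comp, hfg, Functor.map_zero])
  constructor
  · intro hf A x
    obtain ⟨a, ha, rfl⟩ := S.exists_homologyObjMk_eq x
    obtain ⟨B, p, l, hp, hpa⟩ := hf a ha
    exact ⟨B, p, hp, (S.homology_map_homologyObjMk_eq_zero_iff p.op a ha).2 ⟨l, hpa.symm⟩⟩
  · intro hS A a ha
    obtain ⟨B, p, hp, hzero⟩ := hS A (S.homologyObjMk a ha)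
    obtain ⟨l, hl⟩ := (S.homology_map_homologyObjMk_eq_zero_iff p.op a ha).1 hzero
    exact ⟨B, p, l, hp, hl.symm⟩
end

section
/- Let E be a small exact category and E ⊆ F a resolving subcategory with F small. A functor G ∈ Mod(F) is locally effaceable over F if and only if its restriction r(G) ∈ Mod(E) along the inclusion E ⊆ F is locally effaceable over E. -/
open CategoryTheory CategoryTheory.Limits CategoryTheory.Pretriangulated

universe v u

variable {C : Type u} [SmallCategory C] [Preadditive C]

namespace ExactStructure

variable {D : Type*} [Category D] [Preadditive D] (F : ExactStructure D)

theorem deflation_comp {X Y Z : D} {p : X ⟶ Y} {q : Y ⟶ Z} (hp : F.Deflation p)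
    (hq : F.Deflation q) : F.Deflation (p ≫ q) :=
  F.defl_comp hp hq

theorem exists_conflation_comp_of_resolving (P : D → Prop)
    (hgen : ∀ M : D, ∃ (L : D) (p : L ⟶ M), P L ∧ F.Deflation p)
    (hdefl : ∀ ⦃X Y Z : D⦄ (i : X ⟶ Y) (p : Y ⟶ Z), F.IsConflation i p → P Y → P Z → P X)
    {A B : D} {p : B ⟶ A} (hp : F.Deflation p) (hA : P A) :
    ∃ (L : D) (q : L ⟶ B), P L ∧ ∃ (K : D) (i : K ⟶ L), F.IsConflation i (q ≫ p) ∧ P K := by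
  obtain ⟨L, q, hL, hq⟩ := hgen B
  obtain ⟨K, i, hi⟩ := F.deflation_comp hq hp
  exact ⟨L, q, hL, K, i, hi, hdefl i (q ≫ p) hi hL hA⟩

end ExactStructure

theorem CategoryTheory.Functor.map_comp_op_apply {D : Type*} [Category D]
    (G : Dᵒᵖ ⥤ AddCommGrpCat) {X Y Z : D} (f : X ⟶ Y) (g : Y ⟶ Z) (x : G.obj (Opposite.op Z)) :
    G.map (f ≫ g).op x = G.map f.op (G.map g.op x) := by
  rw [op_comp, G.map_comp, AddCommGrpCat.comp_apply]

theorem stmt_14_general (F : ExactStructure C) (P : C → Prop)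
    -- (R1): every object of `F` admits a deflation from an object of `E`
    (hgen : ∀ M : C, ∃ (L : C) (p : L ⟶ M), P L ∧ F.Deflation p)
    -- (R2): `E` is deflation-closed in `F`
    (hdefl : ∀ ⦃X Y Z : C⦄ (i : X ⟶ Y) (p : Y ⟶ Z),
      F.IsConflation i p → P Y → P Z → P X)
    (G : Cᵒᵖ ⥤ AddCommGrpCat.{u}) :
    -- `G` is locally effaceable over `F` ...
    (∀ (A : C) (x : G.obj (Opposite.op A)), ∃ (B : C) (p : B ⟶ A),
      F.Deflation p ∧ G.map p.op x = 0) ↔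
    -- ... iff its restriction is locally effaceable over `E`
    (∀ (A : C), P A → ∀ x : G.obj (Opposite.op A), ∃ (B : C) (p : B ⟶ A), P B ∧
      (∃ (K : C) (i : K ⟶ B), F.IsConflation i p ∧ P K) ∧ G.map p.op x = 0) := by
  constructor
  · intro h A hA x
    obtain ⟨B, p, hp, hpx⟩ := h A x
    obtain ⟨L, q, hL, hqp⟩ := F.exists_conflation_comp_of_resolving P hgen hdefl hp hA
    exact ⟨L, q ≫ p, hL, hqp, by rw [G.map_comp_op_apply, hpx, map_zero]⟩
  · intro h A x
    obtain ⟨L, q, hL, hq⟩ := hgen A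
    obtain ⟨B, p, -, ⟨K, i, hi, -⟩, hpx⟩ := h L hL (G.map q.op x)
    exact ⟨B, p ≫ q, F.deflation_comp ⟨K, i, hi⟩ hq, by rw [G.map_comp_op_apply, hpx]⟩

/-- `G : Fᵒᵖ ⥤ Ab` is locally effaceable over `F` iff its restriction to a resolving
subcategory `E ⊆ F` (given by the predicate `P`) is locally effaceable over `E`. -/
theorem stmt_14 (F : ExactStructure C) (P : C → Prop)
    -- `P` is extension-closed (fully exact subcategory)
    (hext : ∀ ⦃X Y Z : C⦄ (i : X ⟶ Y) (p : Y ⟶ Z),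
      F.IsConflation i p → P X → P Z → P Y)
    -- (R1): every object of `F` admits a deflation from an object of `E`
    (hgen : ∀ M : C, ∃ (L : C) (p : L ⟶ M), P L ∧ F.Deflation p)
    -- (R2): `E` is deflation-closed in `F`
    (hdefl : ∀ ⦃X Y Z : C⦄ (i : X ⟶ Y) (p : Y ⟶ Z),
      F.IsConflation i p → P Y → P Z → P X)
    (G : Cᵒᵖ ⥤ AddCommGrpCat.{u}) :
    -- `G` is locally effaceable over `F` ...
    (∀ (A : C) (x : G.obj (Opposite.op A)), ∃ (B : C) (p : B ⟶ A),
      F.Deflation p ∧ G.map p.op x = 0) ↔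
    -- ... iff its restriction is locally effaceable over `E`
    (∀ (A : C), P A → ∀ x : G.obj (Opposite.op A), ∃ (B : C) (p : B ⟶ A), P B ∧
      (∃ (K : C) (i : K ⟶ B), F.IsConflation i p ∧ P K) ∧ G.map p.op x = 0) :=
  stmt_14_general F P hgen hdefl G
end
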